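/- Let d ≥ 1 and let τ_V be the Vietoris topology on the collection of all closed subsets of ℝ^d, i.e. the topology generated by the sets {F closed : F ⊆ U} and {F closed : F ∩ U ≠ ∅} for U ranging over the open subsets of ℝ^d. Then no countable family of subsets of this hyperspace is a pseudobase for τ_V. In particular, the hyperspace of closed subsets of ℝ^d with the Vietoris topology is not second countable. -/

import Mathlib

open Topology

/-- The type of closed subsets of `ℝ^d`. -/
def ClosedSubsets (d : ℕ) : Type :=
  {F : Set (EuclideanSpace ℝ (Fin d)) // IsClosed F}

/-- The Vietoris topology on the closed subsets of `ℝ^d`, generated by the sets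
`{F closed : F ⊆ U}` and `{F closed : F ∩ U ≠ ∅}` for `U` open. -/
def vietoris (d : ℕ) : TopologicalSpace (ClosedSubsets d) :=
  TopologicalSpace.generateFrom
    ({S | ∃ U : Set (EuclideanSpace ℝ (Fin d)), IsOpen U ∧ S = {F : ClosedSubsets d | F.1 ⊆ U}} ∪
     {S | ∃ U : Set (EuclideanSpace ℝ (Fin d)), IsOpen U ∧
        S = {F : ClosedSubsets d | (F.1 ∩ U).Nonempty}})

/-- A family `B` of subsets of a topological space `(X, τ)` is a pseudobase if for every
open `U`, every `x ∈ U` and every sequence `y` converging to `x`, there are `P ∈ B` and `n₀`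
with `{x} ∪ {y n : n ≥ n₀} ⊆ P ⊆ U`. -/
def IsPseudobase {X : Type*} (τ : TopologicalSpace X) (B : Set (Set X)) : Prop :=
  ∀ U : Set X, IsOpen[τ] U → ∀ x ∈ U, ∀ y : ℕ → X,
    Filter.Tendsto y Filter.atTop (@nhds X τ x) →
    ∃ P ∈ B, ∃ n₀ : ℕ, ({x} ∪ {z | ∃ n ≥ n₀, z = y n}) ⊆ P ∧ P ⊆ U

/-!
A pseudobase is in particular a network: applied to a constant sequence it yields, for every
open `U ∋ x`, a member `P` with `x ∈ P ⊆ U`. Fix a closed discrete copy `{p₀, p₁, …}` of `ℕ` in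
`ℝ^d`. For `S ⊆ ℕ` the closed set `F_S = {pₙ : n ∈ S}` lies in the Vietoris-open set
`V_S = {F | F ∩ {pₙ : n ∉ S} = ∅}`, and `F_T ∈ V_S` iff `T ⊆ S`. A member `P_S` of a network with
`F_S ∈ P_S ⊆ V_S` therefore determines `S`, so a network must have at least as many members as
there are subsets of `ℕ`.
-/

theorem IsPseudobase.exists_mem_subset {X : Type*} {τ : TopologicalSpace X} {B : Set (Set X)}
    (hB : IsPseudobase τ B) {U : Set X} (hU : IsOpen[τ] U) {x : X} (hx : x ∈ U) :
    ∃ P ∈ B, x ∈ P ∧ P ⊆ U := by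
  obtain ⟨P, hPB, _, hsub, hPU⟩ := hB U hU x hx (fun _ => x) tendsto_const_nhds
  exact ⟨P, hPB, hsub (Or.inl rfl), hPU⟩

theorem TopologicalSpace.IsTopologicalBasis.isPseudobase {X : Type*} [TopologicalSpace X]
    {B : Set (Set X)} (hB : IsTopologicalBasis B) : IsPseudobase ‹_› B := by
  intro U hU x hx y hy
  obtain ⟨P, hPB, hxP, hPU⟩ := hB.exists_subset_of_mem_open hx hU
  obtain ⟨n₀, hn₀⟩ := Filter.eventually_atTop.mp (hy ((hB.isOpen hPB).mem_nhds hxP))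
  refine ⟨P, hPB, n₀, ?_, hPU⟩
  rintro z (rfl | ⟨n, hn, rfl⟩)
  exacts [hxP, hn₀ n hn]

theorem countable_of_mem_iff_le {X ι : Type*} [PartialOrder ι] {B : Set (Set X)}
    (hB : B.Countable) (G : ι → X) (V : ι → Set X) (hGV : ∀ i j, G j ∈ V i ↔ j ≤ i)
    (hnet : ∀ i, ∃ P ∈ B, G i ∈ P ∧ P ⊆ V i) : Countable ι := by
  choose P hPB hGP hPV using hnet
  have hP : Function.Injective P := fun i j hij =>
    le_antisymm ((hGV j i).mp (hPV j (hij ▸ hGP i))) ((hGV i j).mp (hPV i (hij ▸ hGP j)))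
  have : Countable (Set.range P) := (hB.mono (Set.range_subset_iff.mpr hPB)).to_subtype
  exact Countable.of_equiv _ (Equiv.ofInjective P hP).symm

theorem exists_isClosedEmbedding_nat (E : Type*) [NormedAddCommGroup E] [NormedSpace ℝ E]
    [Nontrivial E] : ∃ p : ℕ → E, IsClosedEmbedding p := by
  obtain ⟨c, hc⟩ := exists_ne (0 : E)
  exact ⟨_, (isClosedEmbedding_smul_left hc).comp Nat.isClosedEmbedding_coe_real⟩

namespace ClosedSubsets

variable {d : ℕ} {p : ℕ → EuclideanSpace ℝ (Fin d)}

def imageOf (hp : IsClosedEmbedding p) (S : Set ℕ) : ClosedSubsets d :=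
  ⟨p '' S, hp.isClosedMap S (isClosed_discrete S)⟩

def avoiding (hp : IsClosedEmbedding p) (S : Set ℕ) : Set (ClosedSubsets d) :=
  {F | F.1 ⊆ (imageOf hp Sᶜ).1ᶜ}

theorem isOpen_avoiding (hp : IsClosedEmbedding p) (S : Set ℕ) :
    IsOpen[vietoris d] (avoiding hp S) :=
  TopologicalSpace.isOpen_generateFrom_of_mem
    (Or.inl ⟨_, (imageOf hp Sᶜ).2.isOpen_compl, rfl⟩)

theorem imageOf_mem_avoiding_iff (hp : IsClosedEmbedding p) (S T : Set ℕ) :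
    imageOf hp T ∈ avoiding hp S ↔ T ≤ S := by
  change p '' T ⊆ (p '' Sᶜ)ᶜ ↔ T ⊆ S
  rw [Set.subset_compl_iff_disjoint_right, Set.disjoint_image_iff hp.injective,
    Set.disjoint_compl_right_iff_subset]

end ClosedSubsets

theorem not_isPseudobase_vietoris_of_countable (d : ℕ) (hd : 1 ≤ d)
    {B : Set (Set (ClosedSubsets d))} (hB : B.Countable) : ¬ IsPseudobase (vietoris d) B := by
  intro hpseudo
  have : Nonempty (Fin d) := ⟨⟨0, hd⟩⟩
  obtain ⟨p, hp⟩ := exists_isClosedEmbedding_nat (EuclideanSpace ℝ (Fin d))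
  have : Countable (Set ℕ) :=
    countable_of_mem_iff_le hB _ _ (ClosedSubsets.imageOf_mem_avoiding_iff hp) fun S =>
      hpseudo.exists_mem_subset (ClosedSubsets.isOpen_avoiding hp S)
        ((ClosedSubsets.imageOf_mem_avoiding_iff hp S S).mpr le_rfl)
  obtain ⟨f, hf⟩ := Countable.exists_injective_nat (Set ℕ)
  exact Function.cantor_injective f hf

/-- No countable family of subsets of the hyperspace of closed subsets of `ℝ^d` with the
Vietoris topology is a pseudobase; in particular this hyperspace is not second countable. -/
theorem stmt1 (d : ℕ) (hd : 1 ≤ d) :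
    (∀ B : Set (Set (ClosedSubsets d)), B.Countable → ¬ IsPseudobase (vietoris d) B) ∧
    ¬ @SecondCountableTopology (ClosedSubsets d) (vietoris d) := by
  refine ⟨fun B hB => not_isPseudobase_vietoris_of_countable d hd hB, fun hSC => ?_⟩
  let := vietoris d
  obtain ⟨b, hbc, -, hb⟩ := TopologicalSpace.exists_countable_basis (ClosedSubsets d)
  exact not_isPseudobase_vietoris_of_countable d hd hbc hb.isPseudobase
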